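/- Let G be a graph with maximal interval-order subgraph H = G^σ for an ordering σ with i-prefix (v_1,...,v_i). If u, v ∉ {v_1,...,v_i} satisfy N(u) ⊇ N(v) ∩ N^+(v_i), then there exists an ordering σ' with the same i-prefix such that G^{σ'} = H and u precedes v in σ'. -/

import Mathlib

open SimpleGraph

/-- `G` is an interval graph: the intersection graph of a family of closed intervals. -/
def IsIntervalGraph {V : Type*} (G : SimpleGraph V) : Prop :=
  ∃ lo hi : V → ℝ, (∀ v, lo v ≤ hi v) ∧ ∀ u v : V, u ≠ v →
    (G.Adj u v ↔ (Set.Icc (lo u) (hi u) ∩ Set.Icc (lo v) (hi v)).Nonempty)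

/-- `G` is the intersection graph of axis-parallel boxes in `ℝ^d`. -/
def HasBoxRep {V : Type*} (G : SimpleGraph V) (d : ℕ) : Prop :=
  ∃ lo hi : V → Fin d → ℝ, (∀ v i, lo v i ≤ hi v i) ∧
    ∀ u v : V, u ≠ v →
      (G.Adj u v ↔ ∀ i, (Set.Icc (lo u i) (hi u i) ∩ Set.Icc (lo v i) (hi v i)).Nonempty)

/-- The boxicity of a graph. -/
noncomputable def boxicity {V : Type*} (G : SimpleGraph V) : ℕ := sInf {d | HasBoxRep G d}

/-- The Kneser graph `KG(n,2)`. -/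
def kneser2 (n : ℕ) : SimpleGraph {s : Finset (Fin n) // s.card = 2} where
  Adj a b := Disjoint a.1 b.1
  symm := ⟨fun a b h => h.symm⟩
  loopless := ⟨fun a h => by
    have h2 := a.2
    simp only [disjoint_self, Finset.bot_eq_empty] at h
    rw [h] at h2
    simp at h2⟩

/-- The out-neighborhood of `σ i` for a linear ordering `σ` of the vertices. -/
def Nplus {V : Type*} (G : SimpleGraph V) {n : ℕ} (σ : Fin n ≃ V) (i : Fin n) : Set V :=
  {v | ∃ m : Fin n, i < m ∧ v = σ m ∧ G.Adj (σ i) (σ m)}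

/-- `Vset G σ i` is the set `V_i` from the prefix-intersection construction:
common neighbors of `σ 0, …, σ i`. -/
def Vset {V : Type*} (G : SimpleGraph V) {n : ℕ} (σ : Fin n ≃ V) (i : Fin n) : Set V :=
  {w | ∀ j : Fin n, j ≤ i → G.Adj (σ j) w}

/-- The graph `G^σ` from the prefix-intersection construction. -/
def Gsigma {V : Type*} (G : SimpleGraph V) {n : ℕ} (σ : Fin n ≃ V) : SimpleGraph V :=
  SimpleGraph.fromRel (fun u v => ∃ i : Fin n, u = σ i ∧ v ∈ Vset G σ i)

/-!
If `u` already precedes `v` in `σ` there is nothing to do. Otherwise move `u` to the position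
of `v`, shifting the block from `v` up to the predecessor of `u` one step to the right. This keeps
the `i`-prefix, and every edge of `G^σ` survives: the only vertex entering a prefix that did not
contain it before is `u`, and it enters only prefixes that contain `v`, whose common neighbours
lie in `N(v) ∩ N⁺(v_i) ⊆ N(u)`. So `G^σ ≤ G^σ'`, and `G^σ'` is again an interval-order subgraph
of `G`, hence equal to `G^σ` by maximality.
-/

section Gsigma

variable {V : Type*} (G : SimpleGraph V) {n : ℕ} (σ : Fin n ≃ V)

lemma gsigma_adj_iff {a b : Fin n} (hab : a < b) :
    (Gsigma G σ).Adj (σ a) (σ b) ↔ σ b ∈ Vset G σ a := by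
  simp only [Gsigma, fromRel_adj, σ.apply_eq_iff_eq, ne_eq, exists_eq_left']
  refine ⟨?_, fun h => ⟨hab.ne, Or.inl h⟩⟩
  rintro ⟨-, h | h⟩
  · exact h
  · exact absurd (h a hab.le) G.irrefl

lemma gsigma_le : Gsigma G σ ≤ G := by
  rintro x y ⟨-, ⟨j, rfl, h⟩ | ⟨j, rfl, h⟩⟩
  · exact h j le_rfl
  · exact (h j le_rfl).symm

lemma gsigma_le_gsigma {τ : Fin n ≃ V}
    (h : ∀ a b, a < b → σ b ∈ Vset G σ a → (Gsigma G τ).Adj (σ a) (σ b)) :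
    Gsigma G σ ≤ Gsigma G τ := by
  intro x y hxy
  obtain ⟨a, rfl⟩ := σ.surjective x
  obtain ⟨b, rfl⟩ := σ.surjective y
  rcases lt_trichotomy a b with hab | rfl | hab
  · exact h a b hab ((gsigma_adj_iff G σ hab).1 hxy)
  · exact absurd hxy (Gsigma G σ).irrefl
  · exact (h b a hab ((gsigma_adj_iff G σ hab).1 hxy.symm)).symm

open Classical in
noncomputable def firstNonAdj (x : V) : Fin n :=
  (Finset.univ.filter fun j => ¬ G.Adj (σ j) x).min' ⟨σ.symm x, by simp⟩

open Classical in
lemma firstNonAdj_le_iff {x : V} {a : Fin n} :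
    firstNonAdj G σ x ≤ a ↔ ∃ j ≤ a, ¬ G.Adj (σ j) x := by
  unfold firstNonAdj
  refine ⟨fun h => ⟨_, h, ?_⟩,
    fun ⟨j, hja, hj⟩ => (Finset.min'_le _ j (by simpa using hj)).trans hja⟩
  exact (Finset.mem_filter.1 (Finset.min'_mem (Finset.univ.filter fun j => ¬ G.Adj (σ j) x) _)).2

lemma firstNonAdj_le_symm (x : V) : firstNonAdj G σ x ≤ σ.symm x :=
  (firstNonAdj_le_iff G σ).2 ⟨_, le_rfl, by simp⟩

lemma not_gsigma_adj_iff {a b : Fin n} (hab : a < b) :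
    ¬ (Gsigma G σ).Adj (σ a) (σ b) ↔ firstNonAdj G σ (σ b) ≤ a := by
  simp [gsigma_adj_iff G σ hab, firstNonAdj_le_iff, Vset]

lemma Set.Icc_inter_Icc_nonempty_iff_of_le {α : Type*} [LinearOrder α] {a₁ b₁ a₂ b₂ : α}
    (h₁ : a₁ ≤ b₁) (h₂ : a₂ ≤ b₂) (hb : b₁ ≤ b₂) :
    (Set.Icc a₁ b₁ ∩ Set.Icc a₂ b₂).Nonempty ↔ a₂ ≤ b₁ := by
  rw [Set.Icc_inter_Icc, Set.nonempty_Icc, max_le_iff, le_min_iff, le_min_iff]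
  exact ⟨fun h => h.2.1, fun h => ⟨⟨h₁, h₁.trans hb⟩, h, h₂⟩⟩

/-- Vertex `x` gets the interval from the first position of a non-neighbour of `x` to the position
of `x` itself. -/
theorem isIntervalGraph_compl_gsigma : IsIntervalGraph (Gsigma G σ)ᶜ := by
  refine ⟨fun x => (firstNonAdj G σ x : ℕ), fun x => (σ.symm x : ℕ),
    fun x => Nat.cast_le.2 (firstNonAdj_le_symm G σ x), ?_⟩
  have key : ∀ a b : Fin n, a < b → (¬ (Gsigma G σ).Adj (σ a) (σ b) ↔
      (Set.Icc ((firstNonAdj G σ (σ a) : ℕ) : ℝ) (σ.symm (σ a) : ℕ) ∩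
        Set.Icc ((firstNonAdj G σ (σ b) : ℕ) : ℝ) (σ.symm (σ b) : ℕ)).Nonempty) := by
    intro a b hab
    rw [not_gsigma_adj_iff G σ hab, Set.Icc_inter_Icc_nonempty_iff_of_le
      (by exact_mod_cast firstNonAdj_le_symm G σ _) (by exact_mod_cast firstNonAdj_le_symm G σ _)
      (by simpa using hab.le)]
    simp
  intro x y hxy
  obtain ⟨a, rfl⟩ := σ.surjective x
  obtain ⟨b, rfl⟩ := σ.surjective y
  rw [compl_adj, and_iff_right hxy]
  rcases lt_trichotomy a b with hab | rfl | hab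
  · exact key a b hab
  · exact absurd rfl hxy
  · rw [adj_comm, Set.inter_comm]
    exact key b a hab

end Gsigma

namespace Fin

variable {n : ℕ} [NeZero n] {q p : Fin n}

lemma val_cycleIcc (hqp : q ≤ p) (k : Fin n) :
    (cycleIcc q p k : ℕ) = if k = p then (q : ℕ) else if q ≤ k ∧ k < p then k + 1 else k := by
  rcases lt_or_ge k q with hkq | hqk
  · rw [cycleIcc_of_lt hkq, if_neg (by rintro rfl; exact absurd (hkq.trans_le hqp) (lt_irrefl _)),
      if_neg (by rintro ⟨h, -⟩; exact absurd h (not_le.2 hkq))]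
  rcases le_or_gt k p with hkp | hpk
  · rw [cycleIcc_of_le_of_le hqk hkp]
    split_ifs with h₁ h₂
    · rfl
    · exact val_add_one_of_lt' (by have := p.2; have := h₂.2; omega)
    · exact absurd ⟨hqk, lt_of_le_of_ne hkp h₁⟩ h₂
  · rw [cycleIcc_of_gt hpk, if_neg hpk.ne',
      if_neg (by rintro ⟨-, h⟩; exact absurd h (not_lt.2 hpk.le))]

lemma cycleIcc_lt_cycleIcc (hqp : q ≤ p) {a b : Fin n} (hab : a < b) (hb : b = p → a < q) :
    cycleIcc q p a < cycleIcc q p b := by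
  simp only [lt_def, le_def, Fin.ext_iff, val_cycleIcc hqp] at *
  split_ifs <;> omega

lemma le_or_eq_of_cycleIcc_le_cycleIcc (hqp : q ≤ p) {k a : Fin n}
    (h : cycleIcc q p k ≤ cycleIcc q p a) : k ≤ a ∨ k = p ∧ q ≤ a := by
  simp only [lt_def, le_def, Fin.ext_iff, val_cycleIcc hqp] at *
  split_ifs at h <;> omega

lemma cycleIcc_lt_cycleIcc_self (hqp : q < p) : cycleIcc q p p < cycleIcc q p q := by
  simp only [lt_def, Fin.ext_iff, val_cycleIcc hqp.le] at *
  split_ifs <;> omega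

end Fin

open Fin in
/-- `(cycleIcc q p).symm.trans σ` is `σ` with the vertex at position `p` moved to position `q`. -/
theorem gsigma_le_gsigma_cycleIcc {V : Type*} (G : SimpleGraph V) {n : ℕ} [NeZero n]
    (σ : Fin n ≃ V) {i q p : Fin n} (hiq : i < q) (hqp : q ≤ p)
    (hN : G.neighborSet (σ q) ∩ Vset G σ i ⊆ G.neighborSet (σ p)) :
    Gsigma G σ ≤ Gsigma G ((cycleIcc q p).symm.trans σ) := by
  set c := cycleIcc q p
  set τ := c.symm.trans σ
  have hτ : ∀ k, τ (c k) = σ k := fun k => by simp [τ]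
  refine gsigma_le_gsigma G σ fun a b hab hb => ?_
  have hpb : q ≤ a → G.Adj (σ p) (σ b) := fun hqa =>
    hN ⟨hb q hqa, fun j hj => hb j (hj.trans (hiq.le.trans hqa))⟩
  have hcab : c a < c b := cycleIcc_lt_cycleIcc hqp hab fun hbp =>
    lt_of_not_ge fun hqa => G.irrefl (hbp ▸ hpb hqa)
  rw [← hτ a, ← hτ b, gsigma_adj_iff G τ hcab]
  intro j hj
  obtain ⟨k, rfl⟩ := c.surjective j
  rw [hτ, hτ]
  rcases le_or_eq_of_cycleIcc_le_cycleIcc hqp hj with hka | ⟨rfl, hqa⟩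
  · exact hb k hka
  · exact hpb hqa

theorem exists_ordering_with_prefix_general {V : Type*} [Fintype V] (G : SimpleGraph V)
    (σ : Fin (Fintype.card V) ≃ V) (i : Fin (Fintype.card V))
    (hmax : ∀ H', H' ≤ G → IsIntervalGraph H'ᶜ → Gsigma G σ ≤ H' → H' = Gsigma G σ)
    (u v : V) (hv : ∀ j, j ≤ i → σ j ≠ v) (huv : u ≠ v)
    (hN : G.neighborSet v ∩ Vset G σ i ⊆ G.neighborSet u) :
    ∃ σ' : Fin (Fintype.card V) ≃ V, (∀ j, j ≤ i → σ' j = σ j) ∧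
      Gsigma G σ' = Gsigma G σ ∧
      ∃ p q : Fin (Fintype.card V), p < q ∧ σ' p = u ∧ σ' q = v := by
  have := i.neZero
  obtain ⟨p, rfl⟩ := σ.surjective u
  obtain ⟨q, rfl⟩ := σ.surjective v
  rcases lt_or_gt_of_ne (ne_of_apply_ne σ huv) with hpq | hqp
  · exact ⟨σ, fun _ _ => rfl, rfl, p, q, hpq, rfl, rfl⟩
  have hiq : i < q := lt_of_not_ge fun hqi => hv q hqi rfl
  refine ⟨(Fin.cycleIcc q p).symm.trans σ, fun j hj => ?_, ?_,
    Fin.cycleIcc q p p, Fin.cycleIcc q p q, Fin.cycleIcc_lt_cycleIcc_self hqp, by simp, by simp⟩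
  · simp [Equiv.symm_apply_eq, Fin.cycleIcc_of_lt (hj.trans_lt hiq)]
  · exact hmax _ (gsigma_le G _) (isIntervalGraph_compl_gsigma G _)
      (gsigma_le_gsigma_cycleIcc G σ hiq hqp.le hN)

/-- Exchange property for maximal interval-order subgraphs built from a prefix. -/
theorem exists_ordering_with_prefix {V : Type*} [Fintype V] (G : SimpleGraph V)
    (σ : Fin (Fintype.card V) ≃ V) (i : Fin (Fintype.card V))
    (hmax : ∀ H', H' ≤ G → IsIntervalGraph H'ᶜ → Gsigma G σ ≤ H' → H' = Gsigma G σ)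
    (u v : V) (hu : ∀ j, j ≤ i → σ j ≠ u) (hv : ∀ j, j ≤ i → σ j ≠ v) (huv : u ≠ v)
    (hN : G.neighborSet v ∩ Vset G σ i ⊆ G.neighborSet u) :
    ∃ σ' : Fin (Fintype.card V) ≃ V, (∀ j, j ≤ i → σ' j = σ j) ∧
      Gsigma G σ' = Gsigma G σ ∧
      ∃ p q : Fin (Fintype.card V), p < q ∧ σ' p = u ∧ σ' q = v :=
  exists_ordering_with_prefix_general G σ i hmax u v hv huv hN
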